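/- arXiv:math/0304254 — 2 statements merged into one kernel-verified Lean document; each statement's English description precedes it below -/
import Mathlib

section
/- The RTT comultiplication is well defined: if the family T_{i,j}(u) with coefficients in A satisfies the RTT relations, then the family T'_{i,j}(u) := Σ_{k=1}^{n} T_{i,k}(u) ⊗ T_{k,j}(u) with coefficients in A ⊗_K A also satisfies the RTT relations: −(u−v)[T'_{i,j}(u), T'_{k,l}(v)] = T'_{k,j}(u) T'_{i,l}(v) − T'_{k,j}(v) T'_{i,l}(u), coefficient-wise: [T'^{(r)}_{i,j}, T'^{(s+1)}_{k,l}] − [T'^{(r+1)}_{i,j}, T'^{(s)}_{k,l}] = T'^{(r)}_{k,j} T'^{(s)}_{i,l} − T'^{(s)}_{k,j} T'^{(r)}_{i,l} for all r,s ≥ 0. -/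
/-- The substitution `u ↦ u + c` on a formal power series in `u⁻¹` with coefficients in a
`K`-algebra `A`: the `u^{-k}`-coefficient of `f(u+c)` is
`∑_{r ≤ k} (-1)^{k-r} C(k-1, k-r) c^{k-r} • f^{(r)}`,
coming from `(u+c)^{-r} = ∑_m binom(-r, m) c^m u^{-r-m}`. -/
noncomputable def shiftPS (K : Type*) [Field K] {A : Type*} [Ring A] [Algebra K A]
    (c : K) (f : PowerSeries A) : PowerSeries A :=
  PowerSeries.mk fun k => ∑ r ∈ Finset.range (k + 1),
    ((-1 : K) ^ (k - r) * ((k - 1).choose (k - r) : K) * c ^ (k - r)) •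
      PowerSeries.coeff (R := A) r f

/-- The quantum minor
`t(a;b)(u) = ∑_{σ ∈ S_m} sgn σ · T_{a_{σ(1)},b_1}(u) T_{a_{σ(2)},b_2}(u+1) ⋯ T_{a_{σ(m)},b_m}(u+m-1)`
attached to a family of coefficients `T : Fin n → Fin n → ℕ → A`
(where `T_{i,j}(u) = ∑_k T i j k · u^{-k}`). -/
noncomputable def qminor (K : Type*) [Field K] {A : Type*} [Ring A] [Algebra K A]
    {n m : ℕ} (T : Fin n → Fin n → ℕ → A) (a b : Fin m → Fin n) : PowerSeries A :=
  ∑ σ : Equiv.Perm (Fin m),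
    (Equiv.Perm.sign σ : ℤ) •
      ((List.finRange m).map
        fun (p : Fin m) => shiftPS K (((p : ℕ) : K)) (PowerSeries.mk fun k => T (a (σ p)) (b p) k)).prod

/-- The RTT relations for a family `T : Fin n → Fin n → ℕ → A` of coefficients
(`T_{i,j}(u) = δ_{i,j} + ∑_{k≥1} T i j k u^{-k}`), stated coefficient-wise:
`[T_{i,j}^{(r)}, T_{k,l}^{(s+1)}] − [T_{i,j}^{(r+1)}, T_{k,l}^{(s)}]
  = T_{k,j}^{(r)} T_{i,l}^{(s)} − T_{k,j}^{(s)} T_{i,l}^{(r)}`. -/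
def RTTrel {A : Type*} [Ring A] {n : ℕ} (T : Fin n → Fin n → ℕ → A) : Prop :=
  (∀ i j : Fin n, T i j 0 = if i = j then 1 else 0) ∧
  ∀ (i j k l : Fin n) (r s : ℕ),
    (T i j r * T k l (s + 1) - T k l (s + 1) * T i j r)
      - (T i j (r + 1) * T k l s - T k l s * T i j (r + 1))
      = T k j r * T i l s - T k j s * T i l r

open scoped TensorProduct

/-- The coefficients of the RTT comultiplication
`Δ(T_{i,j}(u)) = ∑_{l} T_{i,l}(u) ⊗ T_{l,j}(u)`:
`T'^{(k)}_{i,j} = ∑_{l} ∑_{p+q=k} T_{i,l}^{(p)} ⊗ T_{l,j}^{(q)}`. -/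
noncomputable def coprodT (K : Type*) [Field K] {A : Type*} [Ring A] [Algebra K A]
    {n : ℕ} (T : Fin n → Fin n → ℕ → A) : Fin n → Fin n → ℕ → (A ⊗[K] A) :=
  fun i j k => ∑ l : Fin n, ∑ p ∈ Finset.range (k + 1), T i l p ⊗ₜ[K] T l j (k - p)

private lemma sum4_swap {M : Type*} [AddCommMonoid M] {n : ℕ} (F : Fin n → Fin n → M) :
    ∑ a : Fin n, ∑ b : Fin n, F a b = ∑ a : Fin n, ∑ b : Fin n, F b a :=
  Finset.sum_comm

private lemma sum4_congr {M : Type*} [AddCommMonoid M] {n r s : ℕ}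
    {f g : Fin n → Fin n → ℕ → ℕ → M}
    (h : ∀ a b p q, p ≤ r → q ≤ s → f a b p q = g a b p q) :
    (∑ a : Fin n, ∑ b : Fin n, ∑ p ∈ Finset.range (r + 1), ∑ q ∈ Finset.range (s + 1),
        f a b p q)
    = ∑ a : Fin n, ∑ b : Fin n, ∑ p ∈ Finset.range (r + 1), ∑ q ∈ Finset.range (s + 1),
        g a b p q :=
  Finset.sum_congr rfl fun a _ => Finset.sum_congr rfl fun b _ =>
    Finset.sum_congr rfl fun p hp => Finset.sum_congr rfl fun q hq =>
      h a b p q (Nat.lt_succ_iff.mp (Finset.mem_range.mp hp))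
        (Nat.lt_succ_iff.mp (Finset.mem_range.mp hq))

/-- the RTT comultiplication is well defined: if `T` satisfies the RTT
relations over `A`, then `T'_{i,j}(u) = ∑_k T_{i,k}(u) ⊗ T_{k,j}(u)` satisfies the RTT
relations over `A ⊗[K] A`, coefficient-wise. -/
theorem coprod_preserves_RTT
    {K : Type*} [Field K] [CharZero K] {A : Type*} [Ring A] [Algebra K A]
    {n : ℕ} (hn : 2 ≤ n) (T : Fin n → Fin n → ℕ → A) (hT : RTTrel T) :
    ∀ (i j k l : Fin n) (r s : ℕ),
      (coprodT K T i j r * coprodT K T k l (s + 1)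
          - coprodT K T k l (s + 1) * coprodT K T i j r)
        - (coprodT K T i j (r + 1) * coprodT K T k l s
          - coprodT K T k l s * coprodT K T i j (r + 1))
        = coprodT K T k j r * coprodT K T i l s
          - coprodT K T k j s * coprodT K T i l r := by
  obtain ⟨hT0, hTr⟩ := hT
  have hcen : ∀ (a b : Fin n) (x : A), T a b 0 * x = x * T a b 0 := by
    intro a b x; rw [hT0]; split_ifs <;> simp
  have expand : ∀ (i j k l : Fin n) (r s : ℕ),
      coprodT K T i j r * coprodT K T k l s
      = ∑ a : Fin n, ∑ b : Fin n, ∑ p ∈ Finset.range (r + 1), ∑ q ∈ Finset.range (s + 1),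
          (T i a p * T k b q) ⊗ₜ[K] (T a j (r - p) * T b l (s - q)) := by
    intro i j k l r s
    unfold coprodT
    rw [Finset.sum_mul_sum]
    refine Finset.sum_congr rfl fun a _ => Finset.sum_congr rfl fun b _ => ?_
    rw [Finset.sum_mul_sum]
    exact Finset.sum_congr rfl fun p _ => Finset.sum_congr rfl fun q _ =>
      Algebra.TensorProduct.tmul_mul_tmul _ _ _ _
  have expand' : ∀ (i j k l : Fin n) (r s : ℕ),
      coprodT K T k l s * coprodT K T i j r
      = ∑ a : Fin n, ∑ b : Fin n, ∑ p ∈ Finset.range (r + 1), ∑ q ∈ Finset.range (s + 1),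
          (T k b q * T i a p) ⊗ₜ[K] (T b l (s - q) * T a j (r - p)) := by
    intro i j k l r s
    rw [expand k l i j s r, sum4_swap]
    exact Finset.sum_congr rfl fun a _ => Finset.sum_congr rfl fun b _ => Finset.sum_comm
  have comm_eq : ∀ (i j k l : Fin n) (r s : ℕ),
      coprodT K T i j r * coprodT K T k l s - coprodT K T k l s * coprodT K T i j r
      = ∑ a : Fin n, ∑ b : Fin n, ∑ p ∈ Finset.range (r + 1), ∑ q ∈ Finset.range (s + 1),
          ((T i a p * T k b q - T k b q * T i a p) ⊗ₜ[K] (T a j (r - p) * T b l (s - q))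
           + (T k b q * T i a p) ⊗ₜ[K]
               (T a j (r - p) * T b l (s - q) - T b l (s - q) * T a j (r - p))) := by
    intro i j k l r s
    rw [expand i j k l r s, expand' i j k l r s]
    simp only [← Finset.sum_sub_distrib]
    refine sum4_congr fun a b p q _ _ => ?_
    rw [TensorProduct.sub_tmul, TensorProduct.tmul_sub]
    abel
  intro i j k l r s
  rw [comm_eq i j k l r (s + 1), comm_eq i j k l (r + 1) s,
      expand k j i l r s, expand k j i l s r]
  have hG2 : (∑ a : Fin n, ∑ b : Fin n, ∑ p ∈ Finset.range (s + 1), ∑ q ∈ Finset.range (r + 1),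
        (T k a p * T i b q) ⊗ₜ[K] (T a j (s - p) * T b l (r - q)))
      = ∑ a : Fin n, ∑ b : Fin n, ∑ p ∈ Finset.range (r + 1), ∑ q ∈ Finset.range (s + 1),
        (T k b q * T i a p) ⊗ₜ[K] (T b j (s - q) * T a l (r - p)) := by
    rw [sum4_swap]
    exact Finset.sum_congr rfl fun a _ => Finset.sum_congr rfl fun b _ => Finset.sum_comm
  rw [hG2]
  simp only [Finset.sum_add_distrib]
  have hS1a : (∑ a : Fin n, ∑ b : Fin n, ∑ p ∈ Finset.range (r + 1),
        ∑ q ∈ Finset.range (s + 1 + 1),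
        (T i a p * T k b q - T k b q * T i a p) ⊗ₜ[K] (T a j (r - p) * T b l (s + 1 - q)))
      = ∑ a : Fin n, ∑ b : Fin n, ∑ p ∈ Finset.range (r + 1), ∑ q ∈ Finset.range (s + 1),
        (T i a p * T k b (q + 1) - T k b (q + 1) * T i a p) ⊗ₜ[K]
          (T a j (r - p) * T b l (s - q)) := by
    refine Finset.sum_congr rfl fun a _ => Finset.sum_congr rfl fun b _ =>
      Finset.sum_congr rfl fun p _ => ?_
    rw [Finset.sum_range_succ']
    have h0 : (T i a p * T k b 0 - T k b 0 * T i a p) ⊗ₜ[K]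
        (T a j (r - p) * T b l (s + 1 - 0)) = 0 := by
      rw [← hcen k b (T i a p), sub_self, TensorProduct.zero_tmul]
    rw [h0, add_zero]
    exact Finset.sum_congr rfl fun q _ => by rw [Nat.add_sub_add_right]
  have hS1b : (∑ a : Fin n, ∑ b : Fin n, ∑ p ∈ Finset.range (r + 1 + 1),
        ∑ q ∈ Finset.range (s + 1),
        (T i a p * T k b q - T k b q * T i a p) ⊗ₜ[K] (T a j (r + 1 - p) * T b l (s - q)))
      = ∑ a : Fin n, ∑ b : Fin n, ∑ p ∈ Finset.range (r + 1), ∑ q ∈ Finset.range (s + 1),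
        (T i a (p + 1) * T k b q - T k b q * T i a (p + 1)) ⊗ₜ[K]
          (T a j (r - p) * T b l (s - q)) := by
    refine Finset.sum_congr rfl fun a _ => Finset.sum_congr rfl fun b _ => ?_
    rw [Finset.sum_range_succ']
    have h0 : (∑ q ∈ Finset.range (s + 1),
        (T i a 0 * T k b q - T k b q * T i a 0) ⊗ₜ[K]
          (T a j (r + 1 - 0) * T b l (s - q))) = 0 :=
      Finset.sum_eq_zero fun q _ => by
        rw [hcen i a (T k b q), sub_self, TensorProduct.zero_tmul]
    rw [h0, add_zero]
    exact Finset.sum_congr rfl fun p _ => Finset.sum_congr rfl fun q _ => by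
      rw [Nat.add_sub_add_right]
  have hS2a : (∑ a : Fin n, ∑ b : Fin n, ∑ p ∈ Finset.range (r + 1),
        ∑ q ∈ Finset.range (s + 1 + 1),
        (T k b q * T i a p) ⊗ₜ[K]
          (T a j (r - p) * T b l (s + 1 - q) - T b l (s + 1 - q) * T a j (r - p)))
      = ∑ a : Fin n, ∑ b : Fin n, ∑ p ∈ Finset.range (r + 1), ∑ q ∈ Finset.range (s + 1),
        (T k b q * T i a p) ⊗ₜ[K]
          (T a j (r - p) * T b l (s - q + 1) - T b l (s - q + 1) * T a j (r - p)) := by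
    refine Finset.sum_congr rfl fun a _ => Finset.sum_congr rfl fun b _ =>
      Finset.sum_congr rfl fun p _ => ?_
    rw [Finset.sum_range_succ]
    have h0 : (T k b (s + 1) * T i a p) ⊗ₜ[K]
        (T a j (r - p) * T b l (s + 1 - (s + 1)) - T b l (s + 1 - (s + 1)) * T a j (r - p))
        = 0 := by
      rw [Nat.sub_self, ← hcen b l (T a j (r - p)), sub_self, TensorProduct.tmul_zero]
    rw [h0, add_zero]
    refine Finset.sum_congr rfl fun q hq => ?_
    have hq' : s + 1 - q = s - q + 1 := by
      have := Finset.mem_range.mp hq; omega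
    rw [hq']
  have hS2b : (∑ a : Fin n, ∑ b : Fin n, ∑ p ∈ Finset.range (r + 1 + 1),
        ∑ q ∈ Finset.range (s + 1),
        (T k b q * T i a p) ⊗ₜ[K]
          (T a j (r + 1 - p) * T b l (s - q) - T b l (s - q) * T a j (r + 1 - p)))
      = ∑ a : Fin n, ∑ b : Fin n, ∑ p ∈ Finset.range (r + 1), ∑ q ∈ Finset.range (s + 1),
        (T k b q * T i a p) ⊗ₜ[K]
          (T a j (r - p + 1) * T b l (s - q) - T b l (s - q) * T a j (r - p + 1)) := by
    refine Finset.sum_congr rfl fun a _ => Finset.sum_congr rfl fun b _ => ?_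
    rw [Finset.sum_range_succ]
    have h0 : (∑ q ∈ Finset.range (s + 1),
        (T k b q * T i a (r + 1)) ⊗ₜ[K]
          (T a j (r + 1 - (r + 1)) * T b l (s - q)
            - T b l (s - q) * T a j (r + 1 - (r + 1)))) = 0 :=
      Finset.sum_eq_zero fun q _ => by
        rw [Nat.sub_self, hcen a j (T b l (s - q)), sub_self, TensorProduct.tmul_zero]
    rw [h0, add_zero]
    refine Finset.sum_congr rfl fun p hp => Finset.sum_congr rfl fun q _ => ?_
    have hp' : r + 1 - p = r - p + 1 := by
      have := Finset.mem_range.mp hp; omega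
    rw [hp']
  rw [hS1a, hS1b, hS2a, hS2b]
  have key : ∀ (a b : Fin n) (p q : ℕ),
      ((T i a p * T k b (q + 1) - T k b (q + 1) * T i a p) ⊗ₜ[K]
          (T a j (r - p) * T b l (s - q))
        + (T k b q * T i a p) ⊗ₜ[K]
            (T a j (r - p) * T b l (s - q + 1) - T b l (s - q + 1) * T a j (r - p)))
      - ((T i a (p + 1) * T k b q - T k b q * T i a (p + 1)) ⊗ₜ[K]
          (T a j (r - p) * T b l (s - q))
        + (T k b q * T i a p) ⊗ₜ[K]
            (T a j (r - p + 1) * T b l (s - q) - T b l (s - q) * T a j (r - p + 1)))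
      = ((T k a p * T i b q) ⊗ₜ[K] (T a j (r - p) * T b l (s - q))
          - (T k b q * T i a p) ⊗ₜ[K] (T b j (s - q) * T a l (r - p)))
        + ((T k b q * T i a p) ⊗ₜ[K] (T b j (r - p) * T a l (s - q))
          - (T k a q * T i b p) ⊗ₜ[K] (T a j (r - p) * T b l (s - q))) := by
    intro a b p q
    have h1 := hTr i a k b p q
    have h2 := hTr a j b l (r - p) (s - q)
    calc _ = ((T i a p * T k b (q + 1) - T k b (q + 1) * T i a p)
              - (T i a (p + 1) * T k b q - T k b q * T i a (p + 1))) ⊗ₜ[K]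
                (T a j (r - p) * T b l (s - q))
            + (T k b q * T i a p) ⊗ₜ[K]
              ((T a j (r - p) * T b l (s - q + 1) - T b l (s - q + 1) * T a j (r - p))
                - (T a j (r - p + 1) * T b l (s - q) - T b l (s - q) * T a j (r - p + 1))) := by
          simp only [TensorProduct.sub_tmul, TensorProduct.tmul_sub]; abel
      _ = (T k a p * T i b q - T k a q * T i b p) ⊗ₜ[K] (T a j (r - p) * T b l (s - q))
            + (T k b q * T i a p) ⊗ₜ[K]
              (T b j (r - p) * T a l (s - q) - T b j (s - q) * T a l (r - p)) := by
          rw [h1, h2]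
      _ = _ := by simp only [TensorProduct.sub_tmul, TensorProduct.tmul_sub]; abel
  have hL : (∑ a : Fin n, ∑ b : Fin n, ∑ p ∈ Finset.range (r + 1), ∑ q ∈ Finset.range (s + 1),
        (T i a p * T k b (q + 1) - T k b (q + 1) * T i a p) ⊗ₜ[K]
          (T a j (r - p) * T b l (s - q)))
      + (∑ a : Fin n, ∑ b : Fin n, ∑ p ∈ Finset.range (r + 1), ∑ q ∈ Finset.range (s + 1),
        (T k b q * T i a p) ⊗ₜ[K]
          (T a j (r - p) * T b l (s - q + 1) - T b l (s - q + 1) * T a j (r - p)))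
      - ((∑ a : Fin n, ∑ b : Fin n, ∑ p ∈ Finset.range (r + 1), ∑ q ∈ Finset.range (s + 1),
        (T i a (p + 1) * T k b q - T k b q * T i a (p + 1)) ⊗ₜ[K]
          (T a j (r - p) * T b l (s - q)))
      + (∑ a : Fin n, ∑ b : Fin n, ∑ p ∈ Finset.range (r + 1), ∑ q ∈ Finset.range (s + 1),
        (T k b q * T i a p) ⊗ₜ[K]
          (T a j (r - p + 1) * T b l (s - q) - T b l (s - q) * T a j (r - p + 1))))
      = ∑ a : Fin n, ∑ b : Fin n, ∑ p ∈ Finset.range (r + 1), ∑ q ∈ Finset.range (s + 1),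
        (((T i a p * T k b (q + 1) - T k b (q + 1) * T i a p) ⊗ₜ[K]
            (T a j (r - p) * T b l (s - q))
          + (T k b q * T i a p) ⊗ₜ[K]
              (T a j (r - p) * T b l (s - q + 1) - T b l (s - q + 1) * T a j (r - p)))
        - ((T i a (p + 1) * T k b q - T k b q * T i a (p + 1)) ⊗ₜ[K]
            (T a j (r - p) * T b l (s - q))
          + (T k b q * T i a p) ⊗ₜ[K]
              (T a j (r - p + 1) * T b l (s - q) - T b l (s - q) * T a j (r - p + 1)))) := by
    simp only [← Finset.sum_sub_distrib, ← Finset.sum_add_distrib]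
  have hmid := sum4_congr (r := r) (s := s) fun a b p q _ _ => key a b p q
  have hR : (∑ a : Fin n, ∑ b : Fin n, ∑ p ∈ Finset.range (r + 1), ∑ q ∈ Finset.range (s + 1),
        (((T k a p * T i b q) ⊗ₜ[K] (T a j (r - p) * T b l (s - q))
          - (T k b q * T i a p) ⊗ₜ[K] (T b j (s - q) * T a l (r - p)))
        + ((T k b q * T i a p) ⊗ₜ[K] (T b j (r - p) * T a l (s - q))
          - (T k a q * T i b p) ⊗ₜ[K] (T a j (r - p) * T b l (s - q)))))
      = ((∑ a : Fin n, ∑ b : Fin n, ∑ p ∈ Finset.range (r + 1), ∑ q ∈ Finset.range (s + 1),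
          (T k a p * T i b q) ⊗ₜ[K] (T a j (r - p) * T b l (s - q)))
        - (∑ a : Fin n, ∑ b : Fin n, ∑ p ∈ Finset.range (r + 1), ∑ q ∈ Finset.range (s + 1),
          (T k b q * T i a p) ⊗ₜ[K] (T b j (s - q) * T a l (r - p))))
        + ((∑ a : Fin n, ∑ b : Fin n, ∑ p ∈ Finset.range (r + 1), ∑ q ∈ Finset.range (s + 1),
          (T k b q * T i a p) ⊗ₜ[K] (T b j (r - p) * T a l (s - q)))
        - (∑ a : Fin n, ∑ b : Fin n, ∑ p ∈ Finset.range (r + 1), ∑ q ∈ Finset.range (s + 1),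
          (T k a q * T i b p) ⊗ₜ[K] (T a j (r - p) * T b l (s - q)))) := by
    simp only [Finset.sum_add_distrib, Finset.sum_sub_distrib]
  have hswap : (∑ a : Fin n, ∑ b : Fin n, ∑ p ∈ Finset.range (r + 1),
        ∑ q ∈ Finset.range (s + 1),
        (T k b q * T i a p) ⊗ₜ[K] (T b j (r - p) * T a l (s - q)))
      = ∑ a : Fin n, ∑ b : Fin n, ∑ p ∈ Finset.range (r + 1), ∑ q ∈ Finset.range (s + 1),
        (T k a q * T i b p) ⊗ₜ[K] (T a j (r - p) * T b l (s - q)) :=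
    sum4_swap _
  rw [hL, hmid, hR, hswap, sub_self, add_zero]
end

section
/- The map T(u) ↦ T(−u)^{-1} preserves the RTT relations: if the family T_{i,j}(u) satisfies the RTT relations, then the n×n matrix over A⟦u^{-1}⟧ with entries T_{i,j}(−u) is invertible (its constant term is the identity matrix), and its inverse entries T*_{i,j}(u) := (T(−u)^{-1})_{i,j} have constant terms δ_{i,j} and again satisfy the RTT relations: −(u−v)[T*_{i,j}(u), T*_{k,l}(v)] = T*_{k,j}(u) T*_{i,l}(v) − T*_{k,j}(v) T*_{i,l}(u), coefficient-wise for all r,s ≥ 0. -/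
/-- The substitution `u ↦ −u` on a series in `u⁻¹`, i.e. `f(−u)`:
the `u^{-k}`-coefficient gets multiplied by `(−1)^k`. -/
noncomputable def negPS {A : Type*} [Ring A] (f : PowerSeries A) : PowerSeries A :=
  PowerSeries.mk fun k => ((-1 : ℤ) ^ k) • PowerSeries.coeff (R := A) k f




namespace RTTProofAux

open PowerSeries

variable {A : Type*} [Ring A]

/-! ## The two–variable power series ring `B = A⟦x⟧⟦y⟧` -/

/-- embedding of a series in the inner variable `x` -/
noncomputable def ix : PowerSeries A →+* PowerSeries (PowerSeries A) :=
  PowerSeries.C (R := PowerSeries A)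

/-- embedding of a series in the outer variable `y` -/
noncomputable def iy : PowerSeries A →+* PowerSeries (PowerSeries A) :=
  PowerSeries.map (PowerSeries.C (R := A))

/-- the inner variable `x` -/
noncomputable def xB (A : Type*) [Ring A] : PowerSeries (PowerSeries A) :=
  PowerSeries.C (R := PowerSeries A) PowerSeries.X

/-- the outer variable `y` -/
noncomputable def yB (A : Type*) [Ring A] : PowerSeries (PowerSeries A) :=
  PowerSeries.X

lemma cc_ix_iy (f g : PowerSeries A) (r s : ℕ) :
    coeff (R := A) r (coeff (R := PowerSeries A) s (ix f * iy g)) = coeff (R := A) r f * coeff (R := A) s g := by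
  rw [ix, iy, coeff_C_mul, coeff_map, coeff_mul_C]

lemma cc_iy_ix (f g : PowerSeries A) (r s : ℕ) :
    coeff (R := A) r (coeff (R := PowerSeries A) s (iy g * ix f)) = coeff (R := A) s g * coeff (R := A) r f := by
  rw [ix, iy, coeff_mul_C, coeff_map, coeff_C_mul]

lemma cc_y_zero (h : PowerSeries (PowerSeries A)) (r : ℕ) :
    coeff (R := A) r (coeff (R := PowerSeries A) 0 (yB A * h)) = 0 := by
  rw [yB, show (PowerSeries.X : PowerSeries (PowerSeries A)) * h = h * PowerSeries.X from
      ((PowerSeries.commute_X h).eq).symm, coeff_zero_mul_X, map_zero]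

lemma cc_y_succ (h : PowerSeries (PowerSeries A)) (r s : ℕ) :
    coeff (R := A) r (coeff (R := PowerSeries A) (s+1) (yB A * h)) = coeff (R := A) r (coeff (R := PowerSeries A) s h) := by
  rw [yB, coeff_succ_X_mul]

lemma cc_x_zero (h : PowerSeries (PowerSeries A)) (s : ℕ) :
    coeff (R := A) 0 (coeff (R := PowerSeries A) s (xB A * h)) = 0 := by
  rw [xB, coeff_C_mul, show (PowerSeries.X : PowerSeries A) * (coeff (R := PowerSeries A) s h)
      = (coeff (R := PowerSeries A) s h) * PowerSeries.X from ((PowerSeries.commute_X _).eq).symm,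
    coeff_zero_mul_X]

lemma cc_x_succ (h : PowerSeries (PowerSeries A)) (r s : ℕ) :
    coeff (R := A) (r+1) (coeff (R := PowerSeries A) s (xB A * h)) = coeff (R := A) r (coeff (R := PowerSeries A) s h) := by
  rw [xB, coeff_C_mul, coeff_succ_X_mul]

lemma xB_comm (z : PowerSeries (PowerSeries A)) : xB A * z = z * xB A := by
  ext s
  rw [xB, coeff_C_mul, coeff_mul_C, ((PowerSeries.commute_X (coeff (R := PowerSeries A) s z)).eq).symm]

lemma yB_comm (z : PowerSeries (PowerSeries A)) : yB A * z = z * yB A :=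
  ((PowerSeries.commute_X z).eq).symm

lemma w_comm (z : PowerSeries (PowerSeries A)) : (yB A - xB A) * z = z * (yB A - xB A) := by
  rw [sub_mul, mul_sub, xB_comm, yB_comm]

lemma c_comm (z : PowerSeries (PowerSeries A)) : (xB A * yB A) * z = z * (xB A * yB A) := by
  rw [mul_assoc, yB_comm, ← mul_assoc, xB_comm, mul_assoc]

/-! ## key entry-level lemmas -/

lemma L1_entry (f g a b : PowerSeries A)
    (hf0 : ∀ x : A, coeff (R := A) 0 f * x = x * coeff (R := A) 0 f)
    (hg0 : ∀ x : A, coeff (R := A) 0 g * x = x * coeff (R := A) 0 g)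
    (hrel : ∀ r s : ℕ,
      (coeff (R := A) (r+1) f * coeff (R := A) s g - coeff (R := A) s g * coeff (R := A) (r+1) f)
      - (coeff (R := A) r f * coeff (R := A) (s+1) g - coeff (R := A) (s+1) g * coeff (R := A) r f)
      = coeff (R := A) r a * coeff (R := A) s b - coeff (R := A) s a * coeff (R := A) r b) :
    (yB A - xB A) * (ix f * iy g) - (yB A - xB A) * (iy g * ix f)
      = xB A * yB A * (ix a * iy b) - xB A * yB A * (iy a * ix b) := by
  have hxy : ∀ h : PowerSeries (PowerSeries A), xB A * yB A * h = xB A * (yB A * h) :=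
    fun h => mul_assoc _ _ _
  refine PowerSeries.ext fun s => ?_
  refine PowerSeries.ext fun r => ?_
  simp only [sub_mul, map_sub, hxy]
  rcases s with _ | s <;> rcases r with _ | r
  · simp only [cc_y_zero, cc_x_zero]
    simp
  · -- r+1, s = 0
    simp only [cc_y_zero, cc_x_succ, cc_x_zero, cc_ix_iy, cc_iy_ix]
    rw [hg0]
    abel
  · -- r = 0, s+1
    simp only [cc_y_succ, cc_x_zero, cc_ix_iy, cc_iy_ix]
    rw [hf0]
    abel
  · -- r+1, s+1
    simp only [cc_y_succ, cc_x_succ, cc_ix_iy, cc_iy_ix]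
    rw [← hrel r s]
    abel

lemma III_entry (f g a b : PowerSeries A)
    (h : (yB A - xB A) * (ix f * iy g) - (yB A - xB A) * (iy g * ix f)
      = xB A * yB A * (ix a * iy b) - xB A * yB A * (iy a * ix b)) (p q : ℕ) :
    (coeff (R := A) q g * coeff (R := A) (p+1) f - coeff (R := A) (p+1) f * coeff (R := A) q g)
    - (coeff (R := A) (q+1) g * coeff (R := A) p f - coeff (R := A) p f * coeff (R := A) (q+1) g)
    = coeff (R := A) q a * coeff (R := A) p b - coeff (R := A) p a * coeff (R := A) q b := by
  have H := congrArg (fun z => coeff (R := A) (p+1) (coeff (R := PowerSeries A) (q+1) z)) h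
  simp only [mul_assoc (xB A) (yB A), sub_mul, map_sub, cc_y_succ, cc_x_succ,
    cc_ix_iy, cc_iy_ix] at H
  -- H : (f_{p+1} g_q - f_p g_{q+1}) - (g_q f_{p+1} - g_{q+1} f_p) = a_p b_q - a_q b_p
  have H2 := congrArg (fun z => -z) H
  simp only [neg_sub] at H2
  calc (coeff (R := A) q g * coeff (R := A) (p+1) f - coeff (R := A) (p+1) f * coeff (R := A) q g)
      - (coeff (R := A) (q+1) g * coeff (R := A) p f - coeff (R := A) p f * coeff (R := A) (q+1) g)
      = (coeff (R := A) q g * coeff (R := A) (p+1) f - coeff (R := A) (q+1) g * coeff (R := A) p f)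
        - (coeff (R := A) (p+1) f * coeff (R := A) q g - coeff (R := A) p f * coeff (R := A) (q+1) g) := by abel
    _ = coeff (R := A) q a * coeff (R := A) p b - coeff (R := A) p a * coeff (R := A) q b := H2

/-! ## slot embeddings of matrices -/

variable {R : Type*} [Ring R] {n : ℕ}

def sl1 (F : Matrix (Fin n) (Fin n) R) : Matrix (Fin n × Fin n) (Fin n × Fin n) R :=
  Matrix.of fun p q => if p.2 = q.2 then F p.1 q.1 else 0

def sl2 (F : Matrix (Fin n) (Fin n) R) : Matrix (Fin n × Fin n) (Fin n × Fin n) R :=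
  Matrix.of fun p q => if p.1 = q.1 then F p.2 q.2 else 0

def Pm (R : Type*) [Ring R] (n : ℕ) : Matrix (Fin n × Fin n) (Fin n × Fin n) R :=
  Matrix.of fun p q => if p.1 = q.2 ∧ p.2 = q.1 then 1 else 0

lemma sl1_mul (F G : Matrix (Fin n) (Fin n) R) : sl1 F * sl1 G = sl1 (F * G) := by
  ext ⟨i,k⟩ ⟨j,l⟩
  simp [sl1, Matrix.mul_apply, Fintype.sum_prod_type, ite_and, Finset.sum_ite_eq,
    Finset.sum_ite_eq', mul_ite, ite_mul, mul_zero, zero_mul]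

lemma sl2_mul (F G : Matrix (Fin n) (Fin n) R) : sl2 F * sl2 G = sl2 (F * G) := by
  ext ⟨i,k⟩ ⟨j,l⟩
  simp [sl2, Matrix.mul_apply, Fintype.sum_prod_type, ite_and, Finset.sum_ite_eq,
    Finset.sum_ite_eq', mul_ite, ite_mul, mul_zero, zero_mul]

lemma sl1_one : sl1 (1 : Matrix (Fin n) (Fin n) R) = 1 := by
  ext ⟨i,k⟩ ⟨j,l⟩
  simp only [sl1, Matrix.of_apply, Matrix.one_apply, Prod.ext_iff]
  split_ifs <;> simp_all

lemma sl2_one : sl2 (1 : Matrix (Fin n) (Fin n) R) = 1 := by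
  ext ⟨i,k⟩ ⟨j,l⟩
  simp only [sl2, Matrix.of_apply, Matrix.one_apply, Prod.ext_iff]
  split_ifs <;> simp_all

lemma sl1_mul_sl2_apply (F G : Matrix (Fin n) (Fin n) R) (p q : Fin n × Fin n) :
    (sl1 F * sl2 G) p q = F p.1 q.1 * G p.2 q.2 := by
  obtain ⟨i,k⟩ := p; obtain ⟨j,l⟩ := q
  simp [sl1, sl2, Matrix.mul_apply, Fintype.sum_prod_type, ite_and, Finset.sum_ite_eq,
    Finset.sum_ite_eq', mul_ite, ite_mul, mul_zero, zero_mul]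

lemma sl2_mul_sl1_apply (F G : Matrix (Fin n) (Fin n) R) (p q : Fin n × Fin n) :
    (sl2 G * sl1 F) p q = G p.2 q.2 * F p.1 q.1 := by
  obtain ⟨i,k⟩ := p; obtain ⟨j,l⟩ := q
  simp [sl1, sl2, Matrix.mul_apply, Fintype.sum_prod_type, ite_and, Finset.sum_ite_eq,
    Finset.sum_ite_eq', mul_ite, ite_mul, mul_zero, zero_mul]

lemma Pm_mul_apply (M : Matrix (Fin n × Fin n) (Fin n × Fin n) R) (p q : Fin n × Fin n) :
    (Pm R n * M) p q = M (p.2, p.1) q := by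
  obtain ⟨i,k⟩ := p
  simp [Pm, Matrix.mul_apply, Fintype.sum_prod_type, ite_and, Finset.sum_ite_eq,
    Finset.sum_ite_eq', mul_ite, ite_mul, mul_zero, zero_mul, one_mul]

lemma mul_Pm_apply (M : Matrix (Fin n × Fin n) (Fin n × Fin n) R) (p q : Fin n × Fin n) :
    (M * Pm R n) p q = M p (q.2, q.1) := by
  obtain ⟨j,l⟩ := q
  simp [Pm, Matrix.mul_apply, Fintype.sum_prod_type, ite_and, Finset.sum_ite_eq,
    Finset.sum_ite_eq', mul_ite, ite_mul, mul_zero, zero_mul, mul_one]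

lemma Pm_mul_sl1 (F : Matrix (Fin n) (Fin n) R) : Pm R n * sl1 F = sl2 F * Pm R n := by
  ext p q
  rw [Pm_mul_apply, mul_Pm_apply]
  simp [sl1, sl2]

lemma sl1_mul_Pm (F : Matrix (Fin n) (Fin n) R) : sl1 F * Pm R n = Pm R n * sl2 F := by
  ext p q
  rw [Pm_mul_apply, mul_Pm_apply]
  simp [sl1, sl2]

lemma mul_csmul {m : Type*} [Fintype m] (c : R) (hc : ∀ z : R, c * z = z * c)
    (Z X : Matrix m m R) : Z * (c • X) = c • (Z * X) := by
  ext p q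
  simp only [Matrix.mul_apply, Matrix.smul_apply, smul_eq_mul, Finset.mul_sum]
  refine Finset.sum_congr rfl fun a _ => ?_
  rw [← mul_assoc, ← hc, mul_assoc]

/-! ## power series of matrices vs matrices of power series -/

noncomputable def matPS (n : ℕ) (A : Type*) [Ring A] :
    PowerSeries (Matrix (Fin n) (Fin n) A) →+* Matrix (Fin n) (Fin n) (PowerSeries A) where
  toFun f := Matrix.of fun i j => PowerSeries.mk fun k => coeff (R := Matrix (Fin n) (Fin n) A) k f i j
  map_one' := by
    ext i j k
    simp only [Matrix.of_apply, coeff_mk, PowerSeries.coeff_one, Matrix.one_apply,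
      apply_ite (coeff (R := A) k), map_zero, map_one]
    split_ifs <;> simp_all [Matrix.one_apply]
  map_mul' f g := by
    ext i j k
    simp only [Matrix.of_apply, coeff_mk, PowerSeries.coeff_mul, Matrix.mul_apply,
      Matrix.sum_apply, map_sum]
    exact Finset.sum_comm
  map_zero' := by
    ext i j
    simp
  map_add' f g := by
    ext i j
    simp [Matrix.add_apply]

/-- The abstract RTT-to-inverse derivation, done in the ring of `(n²)×(n²)` matrices. -/
lemma derive {R : Type*} [Ring R] {m : Type*} [Fintype m] [DecidableEq m]
    (w c : R) (hw : ∀ z : R, w*z = z*w) (hc : ∀ z : R, c*z = z*c)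
    (T1 T2 S1 S2 T2x S2x P : Matrix m m R)
    (hT1S1 : T1*S1 = 1) (hS1T1 : S1*T1 = 1) (hT2S2 : T2*S2 = 1) (hS2T2 : S2*T2 = 1)
    (hT2xS2x : T2x*S2x = 1)
    (hPT1 : P*T1 = T2x*P) (hPS1 : P*S1 = S2x*P)
    (hL1 : w • (T1*T2) - w • (T2*T1) = c • (P*(T1*T2)) - c • ((T2*T1)*P)) :
    w • (S1*S2) - w • (S2*S1) = c • ((S1*S2)*P) - c • (P*(S2*S1)) := by
  have hA := congrArg (fun Z => S2 * Z * S2) hL1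
  simp only [Matrix.mul_sub, Matrix.sub_mul, mul_csmul w hw, mul_csmul c hc,
    Matrix.smul_mul] at hA
  rw [show S2 * (T1 * T2) * S2 = S2 * T1 by
        rw [mul_assoc S2 (T1*T2) S2, mul_assoc T1 T2 S2, hT2S2, mul_one],
      show S2 * (T2 * T1) * S2 = T1 * S2 by
        rw [← mul_assoc S2 T2 T1, hS2T2, one_mul],
      show S2 * (P * (T1 * T2)) * S2 = S2 * (P * T1) by
        rw [mul_assoc S2 (P * (T1*T2)) S2, mul_assoc P (T1*T2) S2, mul_assoc T1 T2 S2,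
          hT2S2, mul_one],
      show S2 * ((T2 * T1) * P) * S2 = T1 * (P * S2) by
        rw [← mul_assoc S2 (T2*T1) P, ← mul_assoc S2 T2 T1, hS2T2, one_mul,
          mul_assoc T1 P S2]] at hA
  have hB := congrArg (fun Z => S1 * Z * S1) hA
  simp only [Matrix.mul_sub, Matrix.sub_mul, mul_csmul w hw, mul_csmul c hc,
    Matrix.smul_mul] at hB
  rw [show S1 * (S2 * T1) * S1 = S1 * S2 by
        rw [mul_assoc S1 (S2*T1) S1, mul_assoc S2 T1 S1, hT1S1, mul_one],
      show S1 * (T1 * S2) * S1 = S2 * S1 by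
        rw [← mul_assoc S1 T1 S2, hS1T1, one_mul],
      show S1 * (S2 * (P * T1)) * S1 = (S1 * S2) * P by
        rw [mul_assoc S1 (S2 * (P*T1)) S1, mul_assoc S2 (P*T1) S1, hPT1,
          mul_assoc T2x P S1, hPS1, ← mul_assoc T2x S2x P, hT2xS2x, one_mul, ← mul_assoc],
      show S1 * (T1 * (P * S2)) * S1 = P * (S2 * S1) by
        rw [← mul_assoc S1 T1 (P*S2), hS1T1, one_mul, mul_assoc P S2 S1]] at hB
  exact hB

end RTTProofAux

open RTTProofAux PowerSeries

/-- if `T` satisfies the RTT relations, then the matrix with entries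
`T_{i,j}(−u)` is invertible over `A⟦u⁻¹⟧`, and the entries `T*_{i,j}(u)` of its inverse
have constant terms `δ_{i,j}` and again satisfy the RTT relations coefficient-wise. -/
theorem inverse_of_Tneg_satisfies_RTT
    {K : Type*} [Field K] [CharZero K] {A : Type*} [Ring A] [Algebra K A]
    {n : ℕ} (hn : 2 ≤ n) (T : Fin n → Fin n → ℕ → A) (hT : RTTrel T) :
    ∃ N : Matrix (Fin n) (Fin n) (PowerSeries A),
      (Matrix.of fun i j : Fin n => negPS (PowerSeries.mk fun k => T i j k)) * N = 1 ∧
      N * (Matrix.of fun i j : Fin n => negPS (PowerSeries.mk fun k => T i j k)) = 1 ∧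
      (∀ i j : Fin n, PowerSeries.coeff (R := A) 0 (N i j) = if i = j then 1 else 0) ∧
      ∀ (i j k l : Fin n) (r s : ℕ),
        (PowerSeries.coeff (R := A) r (N i j) * PowerSeries.coeff (R := A) (s + 1) (N k l)
            - PowerSeries.coeff (R := A) (s + 1) (N k l) * PowerSeries.coeff (R := A) r (N i j))
          - (PowerSeries.coeff (R := A) (r + 1) (N i j) * PowerSeries.coeff (R := A) s (N k l)
            - PowerSeries.coeff (R := A) s (N k l) * PowerSeries.coeff (R := A) (r + 1) (N i j))
          = PowerSeries.coeff (R := A) r (N k j) * PowerSeries.coeff (R := A) s (N i l)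
            - PowerSeries.coeff (R := A) s (N k j) * PowerSeries.coeff (R := A) r (N i l) := by
  classical
  obtain ⟨hT0, hTrel⟩ := hT
  set MM : Matrix (Fin n) (Fin n) (PowerSeries A) :=
    Matrix.of fun i j : Fin n => negPS (PowerSeries.mk fun k => T i j k) with hMMdef
  have hcoeffMM : ∀ (k : ℕ) (i j : Fin n),
      coeff (R := A) k (MM i j) = ((-1 : ℤ)^k) • T i j k := by
    intro k i j
    simp [hMMdef, negPS, coeff_mk]
  have hMM0 : ∀ i j, coeff (R := A) 0 (MM i j) = if i = j then (1:A) else 0 := by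
    intro i j
    rw [hcoeffMM, hT0 i j]
    simp
  -- inverse matrix
  set f : PowerSeries (Matrix (Fin n) (Fin n) A) :=
    PowerSeries.mk fun k => Matrix.of fun i j => coeff (R := A) k (MM i j) with hfdef
  have hfc : constantCoeff (R := Matrix (Fin n) (Fin n) A) f = 1 := by
    rw [← coeff_zero_eq_constantCoeff_apply, hfdef, coeff_mk]
    ext i j
    rw [Matrix.of_apply, hMM0, Matrix.one_apply]
  set g : PowerSeries (Matrix (Fin n) (Fin n) A) := PowerSeries.invOfUnit f 1 with hgdef
  have hfg : f * g = 1 := PowerSeries.mul_invOfUnit f 1 (hfc.trans Units.val_one.symm)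
  have hgf : g * f = 1 := PowerSeries.invOfUnit_mul f 1 (hfc.trans Units.val_one.symm)
  set N : Matrix (Fin n) (Fin n) (PowerSeries A) := matPS n A g with hNdef
  have hPhif : matPS n A f = MM := by
    ext i j k
    simp [matPS, hfdef, coeff_mk]
  have hMN : MM * N = 1 := by rw [← hPhif, hNdef, ← map_mul, hfg, map_one]
  have hNM : N * MM = 1 := by rw [← hPhif, hNdef, ← map_mul, hgf, map_one]
  have hNcoeff : ∀ (k : ℕ) (i j : Fin n),
      coeff (R := A) k (N i j) = coeff (R := Matrix (Fin n) (Fin n) A) k g i j := by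
    intro k i j
    rw [hNdef]
    simp [matPS, coeff_mk]
  have hN0 : ∀ i j, coeff (R := A) 0 (N i j) = if i = j then (1:A) else 0 := by
    intro i j
    rw [hNcoeff]
    have h1 : coeff (R := Matrix (Fin n) (Fin n) A) 0 g = 1 := by
      rw [coeff_zero_eq_constantCoeff_apply, hgdef, PowerSeries.constantCoeff_invOfUnit]
      simp
    rw [h1, Matrix.one_apply]
  refine ⟨N, hMN, hNM, hN0, ?_⟩
  -- the sign-twisted relation for the coefficients of MM
  have hsm : ∀ (p q : ℕ) (x y : A),
      (((-1:ℤ)^p) • x) * (((-1:ℤ)^q) • y) = ((-1:ℤ)^(p+q)) • (x*y) := by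
    intro p q x y
    rw [smul_mul_assoc, mul_smul_comm, smul_smul, ← pow_add]
  have htt : ∀ (i j k l : Fin n) (r s : ℕ),
      (coeff (R := A) (r+1) (MM i j) * coeff (R := A) s (MM k l)
        - coeff (R := A) s (MM k l) * coeff (R := A) (r+1) (MM i j))
      - (coeff (R := A) r (MM i j) * coeff (R := A) (s+1) (MM k l)
        - coeff (R := A) (s+1) (MM k l) * coeff (R := A) r (MM i j))
      = coeff (R := A) r (MM k j) * coeff (R := A) s (MM i l)
        - coeff (R := A) s (MM k j) * coeff (R := A) r (MM i l) := by
    intro i j k l r s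
    simp only [hcoeffMM, hsm]
    rw [show r+1+s = (r+s)+1 from by omega, show s+(r+1) = (r+s)+1 from by omega,
        show r+(s+1) = (r+s)+1 from by omega, show s+1+r = (r+s)+1 from by omega,
        show s+r = r+s from by omega]
    simp only [pow_succ, mul_smul, ← smul_sub]
    congr 1
    rw [← hTrel i j k l r s]
    simp only [neg_one_zsmul]
    abel
  have hMMcomm : ∀ (i j : Fin n) (x : A),
      coeff (R := A) 0 (MM i j) * x = x * coeff (R := A) 0 (MM i j) := by
    intro i j x
    rw [hMM0]
    split_ifs <;> simp
  -- matrices over the two-variable ring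
  set Mx : Matrix (Fin n) (Fin n) (PowerSeries (PowerSeries A)) :=
    (ix (A := A)).mapMatrix MM with hMxdef
  set My : Matrix (Fin n) (Fin n) (PowerSeries (PowerSeries A)) :=
    (iy (A := A)).mapMatrix MM with hMydef
  set Nx : Matrix (Fin n) (Fin n) (PowerSeries (PowerSeries A)) :=
    (ix (A := A)).mapMatrix N with hNxdef
  set Ny : Matrix (Fin n) (Fin n) (PowerSeries (PowerSeries A)) :=
    (iy (A := A)).mapMatrix N with hNydef
  have hMx : ∀ i j, Mx i j = ix (MM i j) := by
    intro i j; rw [hMxdef]; simp [RingHom.mapMatrix_apply, Matrix.map_apply]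
  have hMy : ∀ i j, My i j = iy (MM i j) := by
    intro i j; rw [hMydef]; simp [RingHom.mapMatrix_apply, Matrix.map_apply]
  have hNx : ∀ i j, Nx i j = ix (N i j) := by
    intro i j; rw [hNxdef]; simp [RingHom.mapMatrix_apply, Matrix.map_apply]
  have hNy : ∀ i j, Ny i j = iy (N i j) := by
    intro i j; rw [hNydef]; simp [RingHom.mapMatrix_apply, Matrix.map_apply]
  have hMxNx : Mx * Nx = 1 := by rw [hMxdef, hNxdef, ← map_mul, hMN, map_one]
  have hNxMx : Nx * Mx = 1 := by rw [hMxdef, hNxdef, ← map_mul, hNM, map_one]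
  have hMyNy : My * Ny = 1 := by rw [hMydef, hNydef, ← map_mul, hMN, map_one]
  have hNyMy : Ny * My = 1 := by rw [hMydef, hNydef, ← map_mul, hNM, map_one]
  -- the L1 matrix relation
  have hL1 : (yB A - xB A) • (sl1 Mx * sl2 My) - (yB A - xB A) • (sl2 My * sl1 Mx)
      = (xB A * yB A) • (Pm (PowerSeries (PowerSeries A)) n * (sl1 Mx * sl2 My))
        - (xB A * yB A) • ((sl2 My * sl1 Mx) * Pm (PowerSeries (PowerSeries A)) n) := by
    ext p q
    simp only [Matrix.sub_apply, Matrix.smul_apply, smul_eq_mul, Pm_mul_apply, mul_Pm_apply,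
      sl1_mul_sl2_apply, sl2_mul_sl1_apply, hMx, hMy]
    exact congrArg (coeff (R := A) _) (congrArg (coeff (R := PowerSeries A) _)
      (L1_entry (MM p.1 q.1) (MM p.2 q.2) (MM p.2 q.1) (MM p.1 q.2)
        (hMMcomm p.1 q.1) (hMMcomm p.2 q.2) (htt p.1 q.1 p.2 q.2)))
  have hIII := derive (yB A - xB A) (xB A * yB A) (w_comm) (c_comm)
      (sl1 Mx) (sl2 My) (sl1 Nx) (sl2 Ny) (sl2 Mx) (sl2 Nx)
      (Pm (PowerSeries (PowerSeries A)) n)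
      (by rw [sl1_mul, hMxNx, sl1_one])
      (by rw [sl1_mul, hNxMx, sl1_one])
      (by rw [sl2_mul, hMyNy, sl2_one])
      (by rw [sl2_mul, hNyMy, sl2_one])
      (by rw [sl2_mul, hMxNx, sl2_one])
      (Pm_mul_sl1 Mx) (Pm_mul_sl1 Nx) hL1
  intro i j k l r s
  have hE : ((yB A - xB A) • (sl1 Nx * sl2 Ny) - (yB A - xB A) • (sl2 Ny * sl1 Nx)) (k, i) (l, j)
      = ((xB A * yB A) • ((sl1 Nx * sl2 Ny) * Pm (PowerSeries (PowerSeries A)) n)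
        - (xB A * yB A) • (Pm (PowerSeries (PowerSeries A)) n * (sl2 Ny * sl1 Nx))) (k, i) (l, j) := by
    rw [hIII]
  simp only [Matrix.sub_apply, Matrix.smul_apply, smul_eq_mul, Pm_mul_apply, mul_Pm_apply,
    sl1_mul_sl2_apply, sl2_mul_sl1_apply, hNx, hNy] at hE
  exact III_entry (N k l) (N i j) (N k j) (N i l) hE s r
end
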